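/- Preservation for λ_op: if E[c] is closed and well-typed with computation type T ! Δ and ⟨c; E⟩ → ⟨c'; E'⟩, then E'[c'] is closed and well-typed with computation type T ! Δ. -/

import Mathlib

/- A formalisation of λ_op: a fine-grained call-by-value calculus with deep
effect handlers and multi-shot continuations, in de Bruijn style. -/

namespace EffLang

abbrev OpName := String
abbrev Eff := Set OpName

/-- Value types of λ_op. -/
inductive VTy : Type
  | nat  : VTy
  | fn   : VTy → Eff → VTy → VTy    -- S →Δ T
  | cont : VTy → Eff → VTy → VTy    -- S ⇒Δ T

/-- An effect signature Σ, assigning argument and result types to operations. -/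
structure Sig where
  arg : OpName → VTy
  res : OpName → VTy

mutual
  /-- Values. -/
  inductive Val : Type
    | var  : ℕ → Val
    | nat  : ℕ → Val
    | lam  : Comp → Val
    | kont : Comp → Val
  /-- Computations. -/
  inductive Comp : Type
    | app    : Val → Val → Comp
    | ret    : Val → Comp
    | seq    : Comp → Comp → Comp            -- do x ← c₁ in c₂
    | op     : OpName → Val → Comp
    | handle : Comp → Handler → Comp
    | resume : Val → Val → Comp              -- continue v₁ v₂
  /-- Handlers. -/
  inductive Handler : Type
    | retH : Comp → Handler
    | opH  : Handler → OpName → Comp → Handler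
end

def liftR (f : ℕ → ℕ) : ℕ → ℕ
  | 0 => 0
  | n + 1 => f n + 1

mutual
  def Val.rename : Val → (ℕ → ℕ) → Val
    | .var n, f => .var (f n)
    | .nat m, _ => .nat m
    | .lam c, f => .lam (c.rename (liftR f))
    | .kont c, f => .kont (c.rename (liftR f))
  def Comp.rename : Comp → (ℕ → ℕ) → Comp
    | .app v₁ v₂, f => .app (v₁.rename f) (v₂.rename f)
    | .ret v, f => .ret (v.rename f)
    | .seq c₁ c₂, f => .seq (c₁.rename f) (c₂.rename (liftR f))
    | .op o v, f => .op o (v.rename f)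
    | .handle c h, f => .handle (c.rename f) (h.rename f)
    | .resume v₁ v₂, f => .resume (v₁.rename f) (v₂.rename f)
  def Handler.rename : Handler → (ℕ → ℕ) → Handler
    | .retH c, f => .retH (c.rename (liftR f))
    | .opH h o c, f => .opH (h.rename f) o (c.rename (liftR (liftR f)))
end

def liftS (σ : ℕ → Val) : ℕ → Val
  | 0 => .var 0
  | n + 1 => (σ n).rename Nat.succ

mutual
  def Val.subst : Val → (ℕ → Val) → Val
    | .var n, σ => σ n
    | .nat m, _ => .nat m
    | .lam c, σ => .lam (c.subst (liftS σ))
    | .kont c, σ => .kont (c.subst (liftS σ))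
  def Comp.subst : Comp → (ℕ → Val) → Comp
    | .app v₁ v₂, σ => .app (v₁.subst σ) (v₂.subst σ)
    | .ret v, σ => .ret (v.subst σ)
    | .seq c₁ c₂, σ => .seq (c₁.subst σ) (c₂.subst (liftS σ))
    | .op o v, σ => .op o (v.subst σ)
    | .handle c h, σ => .handle (c.subst σ) (h.subst σ)
    | .resume v₁ v₂, σ => .resume (v₁.subst σ) (v₂.subst σ)
  def Handler.subst : Handler → (ℕ → Val) → Handler
    | .retH c, σ => .retH (c.subst (liftS σ))
    | .opH h o c, σ => .opH (h.subst σ) o (c.subst (liftS (liftS σ)))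
end

/-- Substituting a single value for the topmost de Bruijn variable. -/
def Comp.subst1 (c : Comp) (v : Val) : Comp :=
  c.subst fun n => match n with | 0 => v | n + 1 => .var n

/-- Substituting for the two topmost de Bruijn variables
(index 0 is the continuation `k`, index 1 the argument `x`). -/
def Comp.subst2 (c : Comp) (vk vx : Val) : Comp :=
  c.subst fun n => match n with | 0 => vk | 1 => vx | n + 2 => .var n

/-- The operations handled by a handler. -/
def Handler.dom : Handler → Eff
  | .retH _ => ∅
  | .opH h o _ => insert o h.dom

/-- The return clause of a handler. -/
def Handler.retClause : Handler → Comp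
  | .retH c => c
  | .opH h _ _ => h.retClause

/-- The clause of a handler for an operation, if any. -/
def Handler.lookup : Handler → OpName → Option Comp
  | .retH _, _ => none
  | .opH h o c, o' => if o = o' then some c else h.lookup o'

abbrev TCtx := List VTy

mutual
  /-- Typing of values: `Γ ⊢ v : T`. -/
  inductive ValTy : Sig → TCtx → Val → VTy → Prop
    | var {Sg : Sig} {Γ : TCtx} {n : ℕ} {T : VTy} :
        Γ[n]? = some T → ValTy Sg Γ (.var n) T
    | nat {Sg : Sig} {Γ : TCtx} {m : ℕ} : ValTy Sg Γ (.nat m) .nat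
    | lam {Sg : Sig} {Γ : TCtx} {S T : VTy} {Δ : Eff} {c : Comp} :
        CompTy Sg (S :: Γ) c T Δ → ValTy Sg Γ (.lam c) (.fn S Δ T)
    | kont {Sg : Sig} {Γ : TCtx} {S T : VTy} {Δ : Eff} {c : Comp} :
        CompTy Sg (S :: Γ) c T Δ → ValTy Sg Γ (.kont c) (.cont S Δ T)
  /-- Typing of computations: `Γ ⊢ c : T ! Δ`. -/
  inductive CompTy : Sig → TCtx → Comp → VTy → Eff → Prop
    | app {Sg : Sig} {Γ : TCtx} {S T : VTy} {Δ : Eff} {v₁ v₂ : Val} :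
        ValTy Sg Γ v₁ (.fn S Δ T) → ValTy Sg Γ v₂ S → CompTy Sg Γ (.app v₁ v₂) T Δ
    | resume {Sg : Sig} {Γ : TCtx} {S T : VTy} {Δ : Eff} {v₁ v₂ : Val} :
        ValTy Sg Γ v₁ (.cont S Δ T) → ValTy Sg Γ v₂ S → CompTy Sg Γ (.resume v₁ v₂) T Δ
    | ret {Sg : Sig} {Γ : TCtx} {T : VTy} {Δ : Eff} {v : Val} :
        ValTy Sg Γ v T → CompTy Sg Γ (.ret v) T Δ
    | seq {Sg : Sig} {Γ : TCtx} {S T : VTy} {Δ : Eff} {c₁ c₂ : Comp} :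
        CompTy Sg Γ c₁ S Δ → CompTy Sg (S :: Γ) c₂ T Δ → CompTy Sg Γ (.seq c₁ c₂) T Δ
    | op {Sg : Sig} {Γ : TCtx} {Δ : Eff} {o : OpName} {v : Val} :
        ValTy Sg Γ v (Sg.arg o) → o ∈ Δ → CompTy Sg Γ (.op o v) (Sg.res o) Δ
    | handle {Sg : Sig} {Γ : TCtx} {S T : VTy} {Δ₁ Δ₂ : Eff} {c : Comp} {h : Handler} :
        CompTy Sg Γ c S Δ₁ → HandTy Sg Γ h S Δ₁ T Δ₂ →
        (∀ o ∈ Δ₁, o ∉ Δ₂ → o ∈ h.dom) →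
        CompTy Sg Γ (.handle c h) T Δ₂
  /-- Typing of handlers: `Γ ⊢ h : S ! Δ₁ ⇒ T ! Δ₂`. -/
  inductive HandTy : Sig → TCtx → Handler → VTy → Eff → VTy → Eff → Prop
    | retH {Sg : Sig} {Γ : TCtx} {S T : VTy} {Δ₁ Δ₂ : Eff} {c : Comp} :
        CompTy Sg (S :: Γ) c T Δ₂ → HandTy Sg Γ (.retH c) S Δ₁ T Δ₂
    | opH {Sg : Sig} {Γ : TCtx} {S T : VTy} {Δ₁ Δ₂ : Eff} {o : OpName} {h : Handler} {c : Comp} :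
        HandTy Sg Γ h S Δ₁ T Δ₂ →
        CompTy Sg (VTy.cont (Sg.res o) Δ₂ T :: Sg.arg o :: Γ) c T Δ₂ →
        Δ₁ ⊆ Δ₂ ∪ {o} →
        o ∉ h.dom →
        HandTy Sg Γ (.opH h o c) S Δ₁ T Δ₂
end

/-- Evaluation frames. -/
inductive Frame : Type
  | seqF    : Comp → Frame            -- do x ← [-] in c₂
  | handleF : Handler → Frame         -- handle [-] with h

/-- Evaluation contexts, represented as a stack of frames (head innermost). -/
abbrev EvalCtx := List Frame

def plugF : Frame → Comp → Comp
  | .seqF c₂, c => .seq c c₂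
  | .handleF h, c => .handle c h

/-- Plugging a computation into an evaluation context: `E[c]`. -/
def plug : EvalCtx → Comp → Comp
  | [], c => c
  | F :: E, c => plug E (plugF F c)

/-- The operations handled by (handler frames in) an evaluation context. -/
def handled : EvalCtx → Eff
  | [] => ∅
  | .seqF _ :: E => handled E
  | .handleF h :: E => handled E ∪ h.dom

/-- Configurations `⟨c; E⟩`. -/
abbrev Config := Comp × EvalCtx

/-- The small-step operational semantics of λ_op on configurations. -/
inductive Step : Config → Config → Prop
  | app {c : Comp} {v : Val} {E : EvalCtx} :
      Step (.app (.lam c) v, E) (c.subst1 v, E)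
  | seq {c : Comp} {v : Val} {E : EvalCtx} :
      Step (.seq (.ret v) c, E) (c.subst1 v, E)
  | hdl {h : Handler} {v : Val} {E : EvalCtx} :
      Step (.handle (.ret v) h, E) (h.retClause.subst1 v, E)
  | push (F : Frame) (c : Comp) (E : EvalCtx) :
      Step (plugF F c, E) (c, F :: E)
  | pop (F : Frame) (v : Val) (E : EvalCtx) :
      Step (.ret v, F :: E) (plugF F (.ret v), E)
  | op {h : Handler} {o : OpName} {v : Val} {c : Comp} (E₁ E₂ : EvalCtx) :
      h.lookup o = some c →
      o ∉ handled E₂ →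
      Step (.op o v, E₂ ++ .handleF h :: E₁)
           (c.subst2 (.kont (.handle (plug E₂ (.ret (.var 0))) h)) v, E₁)
  | resume {c : Comp} {v : Val} {E : EvalCtx} :
      Step (.resume (.kont c) v, E) (c.subst1 v, E)

/-- Iterated reduction. -/
abbrev Steps : Config → Config → Prop := Relation.ReflTransGen Step

/-- Divergence: an infinite reduction sequence from a configuration. -/
def Diverges (k : Config) : Prop :=
  ∃ f : ℕ → Config, f 0 = k ∧ ∀ n, Step (f n) (f (n + 1))

end EffLang


/-!
Preservation is proved syntactically. Typing is stable under renaming and substitution, and a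
typing of `E[c]` factors through a typing of the evaluation context `E`, so a step that only
rewrites the redex (β-reduction, sequencing, a return clause, resuming a continuation) preserves
the type of the whole term, while pushing or popping a frame does not change `E[c]` at all.
For an operation handled by `h` under an inner context `E₂`, the captured continuation
`κx. handle E₂[return x] with h` is built without shifting `E₂` and `h`; this is sound because
the whole term is closed, so `E₂` and `h` can be weakened from the empty context to `[res o]`,
which gives the continuation the type `res o ⇒Δ₂ T` that the handler clause expects.
-/

namespace EffLang

section Substitution

variable {Sg : Sig}

@[simp]
theorem Handler.dom_rename : ∀ (h : Handler) (f : ℕ → ℕ), (h.rename f).dom = h.dom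
  | .retH _, _ => rfl
  | .opH h _ _, f => by simp [Handler.rename, Handler.dom, h.dom_rename f]

@[simp]
theorem Handler.dom_subst : ∀ (h : Handler) (σ : ℕ → Val), (h.subst σ).dom = h.dom
  | .retH _, _ => rfl
  | .opH h _ _, σ => by simp [Handler.subst, Handler.dom, h.dom_subst σ]

theorem liftR_id : liftR id = id := by
  funext n
  cases n <;> rfl

mutual
theorem Val.rename_id : ∀ v : Val, v.rename id = v
  | .var _ | .nat _ => rfl
  | .lam c => by rw [Val.rename, liftR_id, c.rename_id]
  | .kont c => by rw [Val.rename, liftR_id, c.rename_id]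

theorem Comp.rename_id : ∀ c : Comp, c.rename id = c
  | .app v₁ v₂ => by rw [Comp.rename, v₁.rename_id, v₂.rename_id]
  | .ret v => by rw [Comp.rename, v.rename_id]
  | .seq c₁ c₂ => by rw [Comp.rename, liftR_id, c₁.rename_id, c₂.rename_id]
  | .op _ v => by rw [Comp.rename, v.rename_id]
  | .handle c h => by rw [Comp.rename, c.rename_id, h.rename_id]
  | .resume v₁ v₂ => by rw [Comp.rename, v₁.rename_id, v₂.rename_id]

theorem Handler.rename_id : ∀ h : Handler, h.rename id = h
  | .retH c => by rw [Handler.rename, liftR_id, c.rename_id]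
  | .opH h _ c => by simp only [Handler.rename, liftR_id, h.rename_id, c.rename_id]
end

def RenTy (Γ Γ' : TCtx) (f : ℕ → ℕ) : Prop :=
  ∀ n T, Γ[n]? = some T → Γ'[f n]? = some T

def SubstTy (Sg : Sig) (Γ Γ' : TCtx) (σ : ℕ → Val) : Prop :=
  ∀ n T, Γ[n]? = some T → ValTy Sg Γ' (σ n) T

theorem RenTy.liftR {Γ Γ' : TCtx} {f : ℕ → ℕ} (hf : RenTy Γ Γ' f) (S : VTy) :
    RenTy (S :: Γ) (S :: Γ') (liftR f)
  | 0, _, h => h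
  | n + 1, T, h => hf n T h

theorem renTy_succ {Γ : TCtx} (S : VTy) : RenTy Γ (S :: Γ) Nat.succ :=
  fun _ _ h => h

theorem renTy_id_of_prefix {Γ Γ' : TCtx} (h : Γ <+: Γ') : RenTy Γ Γ' id := fun _ _ hn => by
  obtain ⟨t, rfl⟩ := h
  exact (List.getElem?_append_left (List.getElem?_eq_some_iff.1 hn).1).trans hn

mutual
theorem ValTy.rename {Γ Γ' : TCtx} {f : ℕ → ℕ} (hf : RenTy Γ Γ' f) :
    ∀ {v : Val} {T : VTy}, ValTy Sg Γ v T → ValTy Sg Γ' (v.rename f) T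
  | _, _, .var h => .var (hf _ _ h)
  | _, _, .nat => .nat
  | _, _, .lam hc => .lam (hc.rename (hf.liftR _))
  | _, _, .kont hc => .kont (hc.rename (hf.liftR _))

theorem CompTy.rename {Γ Γ' : TCtx} {f : ℕ → ℕ} (hf : RenTy Γ Γ' f) :
    ∀ {c : Comp} {T : VTy} {Δ : Eff}, CompTy Sg Γ c T Δ → CompTy Sg Γ' (c.rename f) T Δ
  | _, _, _, .app h₁ h₂ => .app (h₁.rename hf) (h₂.rename hf)
  | _, _, _, .resume h₁ h₂ => .resume (h₁.rename hf) (h₂.rename hf)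
  | _, _, _, .ret h => .ret (h.rename hf)
  | _, _, _, .seq h₁ h₂ => .seq (h₁.rename hf) (h₂.rename (hf.liftR _))
  | _, _, _, .op h ho => .op (h.rename hf) ho
  | _, _, _, .handle h₁ h₂ hcov =>
      .handle (h₁.rename hf) (h₂.rename hf) (by simpa using hcov)

theorem HandTy.rename {Γ Γ' : TCtx} {f : ℕ → ℕ} (hf : RenTy Γ Γ' f) :
    ∀ {h : Handler} {S : VTy} {Δ₁ : Eff} {T : VTy} {Δ₂ : Eff},
      HandTy Sg Γ h S Δ₁ T Δ₂ → HandTy Sg Γ' (h.rename f) S Δ₁ T Δ₂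
  | _, _, _, _, _, .retH hc => .retH (hc.rename (hf.liftR _))
  | _, _, _, _, _, .opH hh hc hsub hdom =>
      .opH (hh.rename hf) (hc.rename ((hf.liftR _).liftR _)) hsub (by simpa using hdom)
end

theorem CompTy.weaken {Γ Γ' : TCtx} {c : Comp} {T : VTy} {Δ : Eff} (hc : CompTy Sg Γ c T Δ)
    (hΓ : Γ <+: Γ') : CompTy Sg Γ' c T Δ := by
  simpa only [Comp.rename_id] using hc.rename (renTy_id_of_prefix hΓ)

theorem HandTy.weaken {Γ Γ' : TCtx} {h : Handler} {S : VTy} {Δ₁ : Eff} {T : VTy} {Δ₂ : Eff}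
    (hh : HandTy Sg Γ h S Δ₁ T Δ₂) (hΓ : Γ <+: Γ') : HandTy Sg Γ' h S Δ₁ T Δ₂ := by
  simpa only [Handler.rename_id] using hh.rename (renTy_id_of_prefix hΓ)

theorem SubstTy.liftS {Γ Γ' : TCtx} {σ : ℕ → Val} (hσ : SubstTy Sg Γ Γ' σ) (S : VTy) :
    SubstTy Sg (S :: Γ) (S :: Γ') (liftS σ)
  | 0, _, h => .var h
  | n + 1, T, h => (hσ n T h).rename (renTy_succ S)

mutual
theorem ValTy.subst {Γ Γ' : TCtx} {σ : ℕ → Val} (hσ : SubstTy Sg Γ Γ' σ) :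
    ∀ {v : Val} {T : VTy}, ValTy Sg Γ v T → ValTy Sg Γ' (v.subst σ) T
  | _, _, .var h => hσ _ _ h
  | _, _, .nat => .nat
  | _, _, .lam hc => .lam (hc.subst (hσ.liftS _))
  | _, _, .kont hc => .kont (hc.subst (hσ.liftS _))

theorem CompTy.subst {Γ Γ' : TCtx} {σ : ℕ → Val} (hσ : SubstTy Sg Γ Γ' σ) :
    ∀ {c : Comp} {T : VTy} {Δ : Eff}, CompTy Sg Γ c T Δ → CompTy Sg Γ' (c.subst σ) T Δ
  | _, _, _, .app h₁ h₂ => .app (h₁.subst hσ) (h₂.subst hσ)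
  | _, _, _, .resume h₁ h₂ => .resume (h₁.subst hσ) (h₂.subst hσ)
  | _, _, _, .ret h => .ret (h.subst hσ)
  | _, _, _, .seq h₁ h₂ => .seq (h₁.subst hσ) (h₂.subst (hσ.liftS _))
  | _, _, _, .op h ho => .op (h.subst hσ) ho
  | _, _, _, .handle h₁ h₂ hcov =>
      .handle (h₁.subst hσ) (h₂.subst hσ) (by simpa using hcov)

theorem HandTy.subst {Γ Γ' : TCtx} {σ : ℕ → Val} (hσ : SubstTy Sg Γ Γ' σ) :
    ∀ {h : Handler} {S : VTy} {Δ₁ : Eff} {T : VTy} {Δ₂ : Eff},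
      HandTy Sg Γ h S Δ₁ T Δ₂ → HandTy Sg Γ' (h.subst σ) S Δ₁ T Δ₂
  | _, _, _, _, _, .retH hc => .retH (hc.subst (hσ.liftS _))
  | _, _, _, _, _, .opH hh hc hsub hdom =>
      .opH (hh.subst hσ) (hc.subst ((hσ.liftS _).liftS _)) hsub (by simpa using hdom)
end

theorem CompTy.subst1 {Γ : TCtx} {S T : VTy} {Δ : Eff} {c : Comp} {v : Val}
    (hc : CompTy Sg (S :: Γ) c T Δ) (hv : ValTy Sg Γ v S) : CompTy Sg Γ (c.subst1 v) T Δ :=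
  hc.subst fun
    | 0, _, h => Option.some.inj h ▸ hv
    | _ + 1, _, h => .var h

theorem CompTy.subst2 {Γ : TCtx} {S₀ S₁ T : VTy} {Δ : Eff} {c : Comp} {vk vx : Val}
    (hc : CompTy Sg (S₀ :: S₁ :: Γ) c T Δ) (hk : ValTy Sg Γ vk S₀)
    (hx : ValTy Sg Γ vx S₁) : CompTy Sg Γ (c.subst2 vk vx) T Δ :=
  hc.subst fun
    | 0, _, h => Option.some.inj h ▸ hk
    | 1, _, h => Option.some.inj h ▸ hx
    | _ + 2, _, h => .var h

end Substitution

section Handlers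

variable {Sg : Sig} {Γ : TCtx} {S : VTy} {Δ₁ : Eff} {T : VTy} {Δ₂ : Eff}

theorem HandTy.retClause : ∀ {h : Handler}, HandTy Sg Γ h S Δ₁ T Δ₂ →
    CompTy Sg (S :: Γ) h.retClause T Δ₂
  | _, .retH hc => hc
  | _, .opH hh _ _ _ => hh.retClause

theorem HandTy.lookup {o : OpName} {c : Comp} :
    ∀ {h : Handler}, HandTy Sg Γ h S Δ₁ T Δ₂ → h.lookup o = some c →
      CompTy Sg (.cont (Sg.res o) Δ₂ T :: Sg.arg o :: Γ) c T Δ₂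
  | .retH _, _, hl => by simp [Handler.lookup] at hl
  | .opH _ _ _, .opH hh hc _ _, hl => by
      unfold Handler.lookup at hl
      split_ifs at hl with ho
      · subst ho
        cases hl
        exact hc
      · exact hh.lookup hl

end Handlers

/-- `CtxTy Sg Γ E S Δ₁ T Δ`: plugging a computation of type `S ! Δ₁` into `E` gives one of
type `T ! Δ`. -/
inductive CtxTy (Sg : Sig) (Γ : TCtx) : EvalCtx → VTy → Eff → VTy → Eff → Prop
  | nil {T : VTy} {Δ : Eff} : CtxTy Sg Γ [] T Δ T Δ
  | seqF {S S' : VTy} {Δ₁ : Eff} {T : VTy} {Δ : Eff} {c₂ : Comp} {E : EvalCtx} :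
      CompTy Sg (S :: Γ) c₂ S' Δ₁ → CtxTy Sg Γ E S' Δ₁ T Δ →
      CtxTy Sg Γ (.seqF c₂ :: E) S Δ₁ T Δ
  | handleF {S : VTy} {Δ₁ : Eff} {S' : VTy} {Δ₂ : Eff} {T : VTy} {Δ : Eff} {h : Handler}
      {E : EvalCtx} :
      HandTy Sg Γ h S Δ₁ S' Δ₂ → (∀ o ∈ Δ₁, o ∉ Δ₂ → o ∈ h.dom) →
      CtxTy Sg Γ E S' Δ₂ T Δ →
      CtxTy Sg Γ (.handleF h :: E) S Δ₁ T Δ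

namespace CtxTy

variable {Sg : Sig} {Γ : TCtx} {T : VTy} {Δ : Eff}

theorem plug {E : EvalCtx} {S : VTy} {Δ₁ : Eff} (hE : CtxTy Sg Γ E S Δ₁ T Δ) {c : Comp}
    (hc : CompTy Sg Γ c S Δ₁) : CompTy Sg Γ (EffLang.plug E c) T Δ := by
  induction hE generalizing c with
  | nil => exact hc
  | seqF hc₂ _ ih => exact ih (.seq hc hc₂)
  | handleF hh hcov _ ih => exact ih (.handle hc hh hcov)

theorem exists_of_compTy_plug :
    ∀ (E : EvalCtx) {c : Comp}, CompTy Sg Γ (EffLang.plug E c) T Δ →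
      ∃ S Δ₁, CtxTy Sg Γ E S Δ₁ T Δ ∧ CompTy Sg Γ c S Δ₁
  | [], _, h => ⟨T, Δ, .nil, h⟩
  | .seqF _ :: E, _, h => by
      obtain ⟨_, _, hE, hc⟩ := exists_of_compTy_plug E h
      cases hc with | seq hc hc₂ => exact ⟨_, _, .seqF hc₂ hE, hc⟩
  | .handleF _ :: E, _, h => by
      obtain ⟨_, _, hE, hc⟩ := exists_of_compTy_plug E h
      cases hc with | handle hc hh hcov => exact ⟨_, _, .handleF hh hcov hE, hc⟩

theorem exists_of_append {E₁ : EvalCtx} {S : VTy} {Δ₁ : Eff} :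
    ∀ (E₂ : EvalCtx), CtxTy Sg Γ (E₂ ++ E₁) S Δ₁ T Δ →
      ∃ M Δₘ, CtxTy Sg Γ E₂ S Δ₁ M Δₘ ∧ CtxTy Sg Γ E₁ M Δₘ T Δ
  | [], h => ⟨_, _, .nil, h⟩
  | _ :: E₂, .seqF hc₂ h => by
      obtain ⟨M, Δₘ, hE₂, hE₁⟩ := exists_of_append E₂ h
      exact ⟨M, Δₘ, .seqF hc₂ hE₂, hE₁⟩
  | _ :: E₂, .handleF hh hcov h => by
      obtain ⟨M, Δₘ, hE₂, hE₁⟩ := exists_of_append E₂ h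
      exact ⟨M, Δₘ, .handleF hh hcov hE₂, hE₁⟩

theorem weaken {Γ' : TCtx} {E : EvalCtx} {S : VTy} {Δ₁ : Eff} (hE : CtxTy Sg Γ E S Δ₁ T Δ)
    (hΓ : Γ <+: Γ') : CtxTy Sg Γ' E S Δ₁ T Δ := by
  induction hE with
  | nil => exact .nil
  | seqF hc₂ _ ih => exact .seqF (hc₂.weaken ((List.prefix_cons_inj _).2 hΓ)) ih
  | handleF hh hcov _ ih => exact .handleF (hh.weaken hΓ) hcov ih

end CtxTy

theorem CompTy.plug_replace {Sg : Sig} {Γ : TCtx} {E : EvalCtx} {c c' : Comp} {T : VTy}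
    {Δ : Eff} (hty : CompTy Sg Γ (plug E c) T Δ)
    (hc : ∀ S Δ₁, CompTy Sg Γ c S Δ₁ → CompTy Sg Γ c' S Δ₁) :
    CompTy Sg Γ (plug E c') T Δ := by
  obtain ⟨S, Δ₁, hE, hcS⟩ := CtxTy.exists_of_compTy_plug E hty
  exact hE.plug (hc S Δ₁ hcS)

theorem CompTy.handle_op_step {Sg : Sig} {E₁ E₂ : EvalCtx} {h : Handler} {o : OpName} {v : Val}
    {c : Comp} {T : VTy} {Δ : Eff}
    (hty : CompTy Sg [] (plug (E₂ ++ .handleF h :: E₁) (.op o v)) T Δ)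
    (hl : h.lookup o = some c) :
    CompTy Sg [] (plug E₁ (c.subst2 (.kont (.handle (plug E₂ (.ret (.var 0))) h)) v)) T Δ := by
  obtain ⟨_, Δ₁, hE, hop⟩ := CtxTy.exists_of_compTy_plug _ hty
  cases hop with | op hv _ =>
  obtain ⟨_, _, hE₂, hE₁⟩ := CtxTy.exists_of_append E₂ hE
  cases hE₁ with | handleF hh hcov hE₁ =>
  have hprefix : ([] : TCtx) <+: [Sg.res o] := List.nil_prefix
  have hhole : CompTy Sg [Sg.res o] (.ret (.var 0)) (Sg.res o) Δ₁ := .ret (.var rfl)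
  have hk := CompTy.handle ((hE₂.weaken hprefix).plug hhole) (hh.weaken hprefix) hcov
  exact hE₁.plug ((hh.lookup hl).subst2 (.kont hk) hv)

/-- **Preservation for λ_op** (Theorem B.2): if `E[c]` is closed and well-typed
with computation type `T ! Δ` and `⟨c; E⟩ → ⟨c'; E'⟩`, then `E'[c']` is closed
and well-typed with computation type `T ! Δ`. -/
theorem preservation (Sg : Sig) (c c' : Comp) (E E' : EvalCtx) (T : VTy) (Δ : Eff)
    (hty : CompTy Sg [] (plug E c) T Δ)
    (hstep : Step (c, E) (c', E')) :
    CompTy Sg [] (plug E' c') T Δ := by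
  cases hstep with
  | push | pop => exact hty
  | op _ _ hl _ => exact hty.handle_op_step hl
  | app =>
      refine hty.plug_replace fun _ _ h => ?_
      cases h with | app hf hv => cases hf with | lam hb => exact hb.subst1 hv
  | seq =>
      refine hty.plug_replace fun _ _ h => ?_
      cases h with | seq hc hb => cases hc with | ret hv => exact hb.subst1 hv
  | hdl =>
      refine hty.plug_replace fun _ _ h => ?_
      cases h with | handle hc hh _ => cases hc with | ret hv => exact hh.retClause.subst1 hv
  | resume =>
      refine hty.plug_replace fun _ _ h => ?_
      cases h with | resume hk hv => cases hk with | kont hb => exact hb.subst1 hv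

end EffLang
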